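/- Every solution of the autonomous system with initial condition in the open rectangle (0,1) × (0, 2μ/σ) and different from the equilibrium (1/2, μ/σ) is defined for all t ∈ ℝ and is periodic: there exists τ > 0 such that (p(t + τ), q(t + τ)) = (p(t), q(t)) for all t ∈ ℝ. -/

import Mathlib

/-!
`ham` is a first integral of the system; it is negative on the open box `(0,1) × (0, 2μ/σ)` and
vanishes on its boundary, so the part of the level set through the initial point that lies in the
closed box is a compact subset of the open box. Clamping the field outside the closed box yields a
global solution, which therefore never leaves that level set. Seen from the equilibrium
`(1/2, μ/σ)`, the solution turns at an angular speed bounded below, so it meets the line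
`q = μ/σ` at arbitrarily late times. The system is reversible under `q ↦ 2μ/σ - q`, hence the
solution is symmetric about every such crossing time, and the reflections about two crossing
times `t₁ < t₂` compose to the translation by `2 (t₂ - t₁)`.
-/

open Set Filter Topology Real
open scoped NNReal

section Calculus

variable {𝕜 : Type*} [NontriviallyNormedField 𝕜] {E F : Type*} [NormedAddCommGroup E]
  [NormedSpace 𝕜 E] [NormedAddCommGroup F] [NormedSpace 𝕜 F] {γ : 𝕜 → E × F} {γ' : E × F} {t : 𝕜}

theorem HasDerivAt.fst (h : HasDerivAt γ γ' t) : HasDerivAt (fun s => (γ s).1) γ'.1 t :=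
  (ContinuousLinearMap.fst 𝕜 E F).hasFDerivAt.comp_hasDerivAt t h

theorem HasDerivAt.snd (h : HasDerivAt γ γ' t) : HasDerivAt (fun s => (γ s).2) γ'.2 t :=
  (ContinuousLinearMap.snd 𝕜 E F).hasFDerivAt.comp_hasDerivAt t h

end Calculus

theorem HasDerivAt.arctan_div {u d : ℝ → ℝ} {u' d' t : ℝ} (hu : HasDerivAt u u' t)
    (hd : HasDerivAt d d' t) (ht : d t ≠ 0) :
    HasDerivAt (fun s => Real.arctan (u s / d s))
      ((u' * d t - u t * d') / (u t ^ 2 + d t ^ 2)) t := by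
  convert (hu.div hd ht).arctan using 1
  · rfl
  · simp only [Pi.div_apply]
    field_simp
    ring

/-- Away from `d = 0`, `arctan (u / d)` is a polar angle of `(d, u)`: it grows at rate at least
`ρ` but stays in `(-π/2, π/2)`. -/
theorem exists_mem_Icc_eq_zero_of_angular_speed {u d u' d' : ℝ → ℝ} {ρ : ℝ} (hρ : 0 < ρ)
    (hu : ∀ t, HasDerivAt u (u' t) t) (hd : ∀ t, HasDerivAt d (d' t) t)
    (hrot : ∀ t, ρ * (u t ^ 2 + d t ^ 2) ≤ u' t * d t - u t * d' t) (a : ℝ) :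
    ∃ t ∈ Icc a (a + π / ρ), d t = 0 := by
  by_contra! hne
  set b := a + π / ρ
  have hab : a ≤ b := le_add_of_nonneg_right (div_nonneg pi_pos.le hρ.le)
  have hderiv : ∀ t ∈ Icc a b, HasDerivAt (fun s => arctan (u s / d s))
      ((u' t * d t - u t * d' t) / (u t ^ 2 + d t ^ 2)) t :=
    fun t ht => (hu t).arctan_div (hd t) (hne t ht)
  have hgrowth := (convex_Icc a b).mul_sub_le_image_sub_of_le_deriv
    (fun t ht => (hderiv t ht).continuousAt.continuousWithinAt)
    (fun t ht => (hderiv t (interior_subset ht)).differentiableAt.differentiableWithinAt)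
    (fun t ht => by
      have hpos : 0 < u t ^ 2 + d t ^ 2 := by
        have := hne t (interior_subset ht); positivity
      rw [(hderiv t (interior_subset ht)).deriv, le_div_iff₀ hpos]
      exact hrot t)
    a (left_mem_Icc.2 hab) b (right_mem_Icc.2 hab) hab
  have hπ : ρ * (b - a) = π := by simp only [b]; field_simp; ring
  linarith [neg_pi_div_two_lt_arctan (u a / d a), arctan_lt_pi_div_two (u b / d b)]

/-- The set of times at which `γ` lies in `U ∩ F ⁻¹' {c}` is clopen. -/
theorem mem_inter_preimage_of_hasDerivAt_comp_eq_zero {X : Type*} [TopologicalSpace X]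
    {U : Set X} (hU : IsOpen U) {F : X → ℝ} {c : ℝ} (hc : IsClosed (U ∩ F ⁻¹' {c}))
    {γ : ℝ → X} (hγ : Continuous γ) (hF : ∀ t, γ t ∈ U → HasDerivAt (F ∘ γ) 0 t) {t₀ : ℝ}
    (h₀ : γ t₀ ∈ U ∩ F ⁻¹' {c}) (t : ℝ) : γ t ∈ U ∩ F ⁻¹' {c} := by
  have hopen : IsOpen (γ ⁻¹' U ∩ (F ∘ γ) ⁻¹' {c}) :=
    (hU.preimage hγ).isOpen_inter_preimage_of_deriv_eq_zero
      (fun s hs => (hF s hs).differentiableAt.differentiableWithinAt)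
      (fun s hs => (hF s hs).deriv) {c}
  have hclopen : IsClopen (γ ⁻¹' (U ∩ F ⁻¹' {c})) := ⟨hc.preimage hγ, hopen⟩
  change t ∈ γ ⁻¹' (U ∩ F ⁻¹' {c})
  rw [hclopen.eq_univ ⟨t₀, h₀⟩]
  exact mem_univ t

section ODE

variable {E : Type*} [NormedAddCommGroup E] [NormedSpace ℝ E]

theorem LocallyLipschitz.eqOn_of_hasDerivAt {v : E → E} (hv : LocallyLipschitz v)
    {I : Set ℝ} (hI : I.OrdConnected) {t₀ : ℝ} (ht₀ : t₀ ∈ I) {f g : ℝ → E}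
    (hf : ∀ t ∈ I, HasDerivAt f (v (f t)) t) (hg : ∀ t ∈ I, HasDerivAt g (v (g t)) t)
    (heq : f t₀ = g t₀) : EqOn f g I := by
  intro t ht
  have hJ : uIcc t₀ t ⊆ I := hI.uIcc_subset ht₀ ht
  have hfJ : ContinuousOn f (uIcc t₀ t) :=
    fun s hs => (hf s (hJ hs)).continuousAt.continuousWithinAt
  have hgJ : ContinuousOn g (uIcc t₀ t) :=
    fun s hs => (hg s (hJ hs)).continuousAt.continuousWithinAt
  set S := f '' uIcc t₀ t ∪ g '' uIcc t₀ t
  obtain ⟨K, hK⟩ : ∃ K, LipschitzOnWith K v S :=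
    hv.locallyLipschitzOn.exists_lipschitzOnWith_of_compact
      ((isCompact_uIcc.image_of_continuousOn hfJ).union (isCompact_uIcc.image_of_continuousOn hgJ))
  have hfS : ∀ s ∈ uIcc t₀ t, f s ∈ S := fun s hs => Or.inl (mem_image_of_mem f hs)
  have hgS : ∀ s ∈ uIcc t₀ t, g s ∈ S := fun s hs => Or.inr (mem_image_of_mem g hs)
  rcases le_total t₀ t with h | h
  · have hsub : Icc t₀ t ⊆ uIcc t₀ t := Icc_subset_uIcc
    exact ODE_solution_unique_of_mem_Icc_right (v := fun _ => v) (fun _ _ => hK)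
      (hfJ.mono hsub) (fun s hs => (hf s (hJ (hsub (Ico_subset_Icc_self hs)))).hasDerivWithinAt)
      (fun s hs => hfS s (hsub (Ico_subset_Icc_self hs)))
      (hgJ.mono hsub) (fun s hs => (hg s (hJ (hsub (Ico_subset_Icc_self hs)))).hasDerivWithinAt)
      (fun s hs => hgS s (hsub (Ico_subset_Icc_self hs))) heq (right_mem_Icc.2 h)
  · have hsub : Icc t t₀ ⊆ uIcc t₀ t := Icc_subset_uIcc'
    exact ODE_solution_unique_of_mem_Icc_left (v := fun _ => v) (fun _ _ => hK)
      (hfJ.mono hsub) (fun s hs => (hf s (hJ (hsub (Ioc_subset_Icc_self hs)))).hasDerivWithinAt)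
      (fun s hs => hfS s (hsub (Ioc_subset_Icc_self hs)))
      (hgJ.mono hsub) (fun s hs => (hg s (hJ (hsub (Ioc_subset_Icc_self hs)))).hasDerivWithinAt)
      (fun s hs => hgS s (hsub (Ioc_subset_Icc_self hs))) heq (left_mem_Icc.2 h)

variable [CompleteSpace E] {v : E → E} {K C : ℝ≥0}

theorem LipschitzWith.exists_forall_mem_Ioo_hasDerivAt (hv : LipschitzWith K v)
    (hC : ∀ x, ‖v x‖ ≤ C) (x₀ : E) {T : ℝ} (hT : 0 ≤ T) :
    ∃ γ : ℝ → E, γ 0 = x₀ ∧ ∀ t ∈ Ioo (-T) T, HasDerivAt γ (v (γ t)) t := by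
  have hpl : IsPicardLindelof (fun _ => v) (tmin := -T) (tmax := T)
      ⟨0, by constructor <;> linarith⟩ x₀ (C * ⟨T, hT⟩) 0 C K :=
    { lipschitzOnWith := fun _ _ => hv.lipschitzOnWith
      continuousOn := fun _ _ => continuousOn_const
      norm_le := fun _ _ x _ => hC x
      mul_max_le := by simp; rfl }
  obtain ⟨γ, hγ0, hγ⟩ := hpl.exists_eq_forall_mem_Icc_hasDerivWithinAt₀
  exact ⟨γ, hγ0, fun t ht =>
    (hγ t (Ioo_subset_Icc_self ht)).hasDerivAt (Icc_mem_nhds ht.1 ht.2)⟩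

theorem LipschitzWith.exists_forall_hasDerivAt (hv : LipschitzWith K v) (hC : ∀ x, ‖v x‖ ≤ C)
    (x₀ : E) : ∃ γ : ℝ → E, γ 0 = x₀ ∧ ∀ t, HasDerivAt γ (v (γ t)) t := by
  choose sol hsol0 hsol using fun n : ℕ => hv.exists_forall_mem_Ioo_hasDerivAt hC x₀ n.cast_nonneg
  have hmono : ∀ m n : ℕ, m ≤ n → ∀ t ∈ Ioo (-(m : ℝ)) m, sol m t = sol n t := by
    intro m n hmn t ht
    have hmn' : (m : ℝ) ≤ n := Nat.cast_le.2 hmn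
    exact hv.locallyLipschitz.eqOn_of_hasDerivAt ordConnected_Ioo
      ⟨by linarith [ht.1, ht.2], by linarith [ht.1, ht.2]⟩ (hsol m)
      (fun s hs => hsol n s ⟨by linarith [hs.1], by linarith [hs.2]⟩)
      ((hsol0 m).trans (hsol0 n).symm) ht
  have hagree : ∀ n : ℕ, ∀ t ∈ Ioo (-(n : ℝ)) n, sol (⌊|t|⌋₊ + 1) t = sol n t := by
    intro n t ht
    have hN : t ∈ Ioo (-((⌊|t|⌋₊ + 1 : ℕ) : ℝ)) (⌊|t|⌋₊ + 1 : ℕ) := by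
      rw [mem_Ioo, ← abs_lt]; push_cast; exact Nat.lt_floor_add_one _
    rcases le_total (⌊|t|⌋₊ + 1) n with h | h
    · exact hmono _ _ h t hN
    · exact (hmono _ _ h t ht).symm
  refine ⟨fun t => sol (⌊|t|⌋₊ + 1) t, by simpa using hsol0 1, fun t => ?_⟩
  set N := ⌊|t|⌋₊ + 1
  have hN : t ∈ Ioo (-(N : ℝ)) N := by
    rw [mem_Ioo, ← abs_lt]; push_cast [N]; exact Nat.lt_floor_add_one _
  have hev : (fun s => sol (⌊|s|⌋₊ + 1) s) =ᶠ[𝓝 t] sol N :=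
    eventually_of_mem (isOpen_Ioo.mem_nhds hN) (hagree N)
  simpa only [hagree N t hN] using (hsol N t hN).congr_of_eventuallyEq hev

end ODE

namespace PQSystem

variable (μ σ : ℝ)

noncomputable section

def field (z : ℝ × ℝ) : ℝ × ℝ :=
  (μ * (z.1 - z.1 ^ 2) + σ * (z.1 ^ 2 - z.1) * z.2,
    μ * (2 * z.1 - 1) * z.2 + σ / 2 * (1 - 2 * z.1) * z.2 ^ 2)

def ham (z : ℝ × ℝ) : ℝ :=
  μ * (z.1 ^ 2 - z.1) * z.2 + σ / 2 * (z.1 - z.1 ^ 2) * z.2 ^ 2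

def box : Set (ℝ × ℝ) := Ioo 0 1 ×ˢ Ioo 0 (2 * μ / σ)

def closedBox : Set (ℝ × ℝ) := Icc 0 1 ×ˢ Icc 0 (2 * μ / σ)

def clamp (z : ℝ × ℝ) : ℝ × ℝ := (max (min z.1 1) 0, max (min z.2 (2 * μ / σ)) 0)

def reflect (z : ℝ × ℝ) : ℝ × ℝ := (z.1, 2 * μ / σ - z.2)

end

theorem contDiff_field {n : WithTop ℕ∞} : ContDiff ℝ n (field μ σ) := by
  unfold field; fun_prop

theorem continuous_ham : Continuous (ham μ σ) := by
  unfold ham; fun_prop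

theorem ham_eq_neg_mul (z : ℝ × ℝ) :
    ham μ σ z = -((z.1 - z.1 ^ 2) * (μ * z.2 - σ / 2 * z.2 ^ 2)) := by
  unfold ham; ring

theorem isOpen_box : IsOpen (box μ σ) := isOpen_Ioo.prod isOpen_Ioo

theorem box_subset_closedBox : box μ σ ⊆ closedBox μ σ :=
  prod_mono Ioo_subset_Icc_self Ioo_subset_Icc_self

theorem isCompact_closedBox : IsCompact (closedBox μ σ) := isCompact_Icc.prod isCompact_Icc

theorem convex_closedBox : Convex ℝ (closedBox μ σ) := (convex_Icc 0 1).prod (convex_Icc _ _)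

theorem lipschitzWith_clamp : LipschitzWith 1 (clamp μ σ) := by
  unfold clamp
  simpa using ((LipschitzWith.prod_fst.min_const 1).max_const 0).prodMk
    ((LipschitzWith.prod_snd.min_const (2 * μ / σ)).max_const 0)

variable {μ σ}

theorem clamp_mem_closedBox (hμσ : 0 ≤ 2 * μ / σ) (z : ℝ × ℝ) : clamp μ σ z ∈ closedBox μ σ :=
  ⟨⟨le_max_right _ _, max_le (min_le_right _ _) zero_le_one⟩,
    ⟨le_max_right _ _, max_le (min_le_right _ _) hμσ⟩⟩

theorem clamp_eq_self {z : ℝ × ℝ} (hz : z ∈ closedBox μ σ) : clamp μ σ z = z := by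
  obtain ⟨⟨h₁, h₁'⟩, h₂, h₂'⟩ := hz
  simp [clamp, h₁, h₁', h₂, h₂']

theorem field_reflect (hσ : σ ≠ 0) (z : ℝ × ℝ) :
    field μ σ (reflect μ σ z) = (-(field μ σ z).1, (field μ σ z).2) := by
  simp only [field, reflect, Prod.mk.injEq]
  constructor <;> field_simp <;> ring

/-- `field` is the Hamiltonian vector field `(-∂ham/∂q, ∂ham/∂p)`. -/
theorem hasDerivAt_ham_comp {γ : ℝ → ℝ × ℝ} {t : ℝ} (hγ : HasDerivAt γ (field μ σ (γ t)) t) :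
    HasDerivAt (ham μ σ ∘ γ) 0 t := by
  have hp := hγ.fst
  have hq := hγ.snd
  refine HasDerivAt.congr_deriv (((((hp.fun_pow 2).fun_sub hp).const_mul μ).fun_mul hq).fun_add
    (((hp.fun_sub (hp.fun_pow 2)).const_mul (σ / 2)).fun_mul (hq.fun_pow 2))) ?_
  simp only [field]
  ring

theorem factors_pos_of_mem_box (hσ : 0 < σ) {z : ℝ × ℝ} (hz : z ∈ box μ σ) :
    0 < z.1 - z.1 ^ 2 ∧ 0 < μ * z.2 - σ / 2 * z.2 ^ 2 := by
  obtain ⟨⟨h₁, h₁'⟩, h₂, h₂'⟩ := hz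
  have hq : z.2 * σ < 2 * μ := (lt_div_iff₀ hσ).1 h₂'
  constructor <;> nlinarith

theorem ham_neg (hσ : 0 < σ) {z : ℝ × ℝ} (hz : z ∈ box μ σ) : ham μ σ z < 0 := by
  rw [ham_eq_neg_mul, neg_lt_zero]
  exact mul_pos (factors_pos_of_mem_box hσ hz).1 (factors_pos_of_mem_box hσ hz).2

theorem mem_box_of_ham_ne_zero (hσ : σ ≠ 0) {z : ℝ × ℝ} (hz : z ∈ closedBox μ σ)
    (hH : ham μ σ z ≠ 0) : z ∈ box μ σ := by
  obtain ⟨⟨h₁, h₁'⟩, h₂, h₂'⟩ := hz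
  refine ⟨⟨h₁.lt_of_ne ?_, h₁'.lt_of_ne ?_⟩, h₂.lt_of_ne ?_, h₂'.lt_of_ne ?_⟩ <;>
    rintro h <;> apply hH <;> rw [ham_eq_neg_mul]
  · simp [← h]
  · simp [h]
  · simp [← h]
  · rw [h]; field_simp; ring

theorem isClosed_box_inter_preimage (hσ : σ ≠ 0) {c : ℝ} (hc : c ≠ 0) :
    IsClosed (box μ σ ∩ ham μ σ ⁻¹' {c}) := by
  have : box μ σ ∩ ham μ σ ⁻¹' {c} = closedBox μ σ ∩ ham μ σ ⁻¹' {c} :=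
    Subset.antisymm (inter_subset_inter_left _ (box_subset_closedBox μ σ))
      fun z ⟨hz, hH⟩ => ⟨mem_box_of_ham_ne_zero hσ hz (hH.symm ▸ hc), hH⟩
  rw [this]
  exact (isCompact_closedBox μ σ).isClosed.inter (isClosed_singleton.preimage (continuous_ham μ σ))

/-- Clamping the field to the closed box makes it globally Lipschitz and bounded. -/
theorem exists_hasDerivAt_field_clamp (hμσ : 0 ≤ 2 * μ / σ) (x₀ : ℝ × ℝ) :
    ∃ γ : ℝ → ℝ × ℝ, γ 0 = x₀ ∧ ∀ t, HasDerivAt γ (field μ σ (clamp μ σ (γ t))) t := by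
  obtain ⟨K, hK⟩ := (contDiff_field μ σ (n := 1)).contDiffOn.exists_lipschitzOnWith one_ne_zero
    (convex_closedBox μ σ) (isCompact_closedBox μ σ)
  obtain ⟨C, hC⟩ := (isCompact_closedBox μ σ).exists_bound_of_continuousOn
    (contDiff_field μ σ (n := 0)).continuous.continuousOn
  have hlip : LipschitzWith (K * 1) (field μ σ ∘ clamp μ σ) :=
    lipschitzOnWith_univ.1 <| hK.comp (lipschitzWith_clamp μ σ).lipschitzOnWith
      fun z _ => clamp_mem_closedBox hμσ z
  exact hlip.exists_forall_hasDerivAt (C := C.toNNReal)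
    (fun z => (hC _ (clamp_mem_closedBox hμσ z)).trans (Real.le_coe_toNNReal C)) x₀

theorem exists_global_solution (hσ : 0 < σ) {x₀ : ℝ × ℝ} (hx₀ : x₀ ∈ box μ σ) :
    ∃ γ : ℝ → ℝ × ℝ, γ 0 = x₀ ∧ (∀ t, HasDerivAt γ (field μ σ (γ t)) t) ∧
      ∀ t, γ t ∈ box μ σ ∩ ham μ σ ⁻¹' {ham μ σ x₀} := by
  obtain ⟨γ, hγ0, hγ⟩ := exists_hasDerivAt_field_clamp (hx₀.2.1.trans hx₀.2.2).le x₀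
  have hfield : ∀ t, γ t ∈ box μ σ → HasDerivAt γ (field μ σ (γ t)) t := fun t ht => by
    simpa only [clamp_eq_self (box_subset_closedBox μ σ ht)] using hγ t
  have hlevel := mem_inter_preimage_of_hasDerivAt_comp_eq_zero (isOpen_box μ σ)
    (isClosed_box_inter_preimage hσ.ne' (ham_neg hσ hx₀).ne)
    (continuous_iff_continuousAt.2 fun t => (hγ t).continuousAt)
    (fun t ht => hasDerivAt_ham_comp (hfield t ht)) (t₀ := 0) (by rw [hγ0]; exact ⟨hx₀, rfl⟩)
  exact ⟨γ, hγ0, fun t => hfield t (hlevel t).1, hlevel⟩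

/-- The right-hand side is `r² θ'` in polar coordinates about the centre `(1/2, μ/σ)`. It equals
`σ G d² + 2 W u²` where `ham = -G W`, and since `G ≤ 1/4` and `W ≤ μ² / (2σ)`, the constraint
`G W = -c` keeps both `G` and `W` away from `0`. -/
theorem exists_angular_speed (hμ : 0 < μ) (hσ : 0 < σ) {c : ℝ} (hc : c < 0) :
    ∃ ρ > 0, ∀ z ∈ box μ σ ∩ ham μ σ ⁻¹' {c},
      ρ * ((z.1 - 1 / 2) ^ 2 + (μ / σ - z.2) ^ 2) ≤
        (field μ σ z).1 * (μ / σ - z.2) - (z.1 - 1 / 2) * -(field μ σ z).2 := by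
  refine ⟨min (-8 * c) (-2 * σ ^ 2 * c / μ ^ 2), lt_min (by linarith) ?_, ?_⟩
  · exact div_pos (by nlinarith [sq_pos_of_pos hσ]) (by positivity)
  rintro z ⟨hz, hzh⟩
  have hGW : (z.1 - z.1 ^ 2) * (μ * z.2 - σ / 2 * z.2 ^ 2) = -c := by
    rw [← show ham μ σ z = c from hzh, ham_eq_neg_mul, neg_neg]
  have hrot : (field μ σ z).1 * (μ / σ - z.2) - (z.1 - 1 / 2) * -(field μ σ z).2 =
      σ * (z.1 - z.1 ^ 2) * (μ / σ - z.2) ^ 2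
        + 2 * (μ * z.2 - σ / 2 * z.2 ^ 2) * (z.1 - 1 / 2) ^ 2 := by
    simp only [field]; field_simp; ring
  obtain ⟨hG, hW⟩ := factors_pos_of_mem_box hσ hz
  have hW8 : -8 * c ≤ 2 * (μ * z.2 - σ / 2 * z.2 ^ 2) := by
    nlinarith [mul_nonneg hW.le (sq_nonneg (z.1 - 1 / 2))]
  have hGσ : -2 * σ ^ 2 * c / μ ^ 2 ≤ σ * (z.1 - z.1 ^ 2) := by
    rw [div_le_iff₀ (by positivity), show c = -((z.1 - z.1 ^ 2) * (μ * z.2 - σ / 2 * z.2 ^ 2))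
      by linarith]
    nlinarith [mul_nonneg (mul_pos hσ hG).le (sq_nonneg (μ - σ * z.2))]
  rw [hrot]
  nlinarith [mul_le_mul_of_nonneg_right ((min_le_left _ (-2 * σ ^ 2 * c / μ ^ 2)).trans hW8)
      (sq_nonneg (z.1 - 1 / 2)),
    mul_le_mul_of_nonneg_right ((min_le_right (-8 * c) _).trans hGσ) (sq_nonneg (μ / σ - z.2))]

theorem exists_snd_eq (hμ : 0 < μ) (hσ : 0 < σ) {γ : ℝ → ℝ × ℝ}
    (hγ : ∀ t, HasDerivAt γ (field μ σ (γ t)) t) {c : ℝ}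
    (hlevel : ∀ t, γ t ∈ box μ σ ∩ ham μ σ ⁻¹' {c}) (a : ℝ) : ∃ t ≥ a, (γ t).2 = μ / σ := by
  have hc : c < 0 := (hlevel 0).2 ▸ ham_neg hσ (hlevel 0).1
  obtain ⟨ρ, hρ, hrot⟩ := exists_angular_speed hμ hσ hc
  obtain ⟨t, ht, hd⟩ := exists_mem_Icc_eq_zero_of_angular_speed hρ
    (fun t => (hγ t).fst.sub_const (1 / 2)) (fun t => (hγ t).snd.const_sub (μ / σ))
    (fun t => hrot _ (hlevel t)) a
  exact ⟨t, ht.1, (sub_eq_zero.1 hd).symm⟩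

theorem eq_reflect_of_snd_eq (hσ : σ ≠ 0) {γ : ℝ → ℝ × ℝ}
    (hγ : ∀ t, HasDerivAt γ (field μ σ (γ t)) t) {t₁ : ℝ} (h : (γ t₁).2 = μ / σ) (t : ℝ) :
    γ t = reflect μ σ (γ (2 * t₁ - t)) := by
  have hrev : ∀ t, HasDerivAt (fun s => reflect μ σ (γ (2 * t₁ - s)))
      (field μ σ (reflect μ σ (γ (2 * t₁ - t)))) t := by
    intro t
    have h' := (hγ (2 * t₁ - t)).scomp t ((hasDerivAt_id t).const_sub (2 * t₁))
    rw [field_reflect hσ]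
    convert h'.fst.prodMk (h'.snd.const_sub (2 * μ / σ)) using 1 <;> simp [reflect]
  refine (contDiff_field μ σ).locallyLipschitz.eqOn_of_hasDerivAt ordConnected_univ (mem_univ t₁)
    (fun t _ => hγ t) (fun t _ => hrev t) ?_ (mem_univ t)
  rw [two_mul, add_sub_cancel_right]
  ext
  · rfl
  · simp only [reflect, h]; ring

theorem exists_periodic (hμ : 0 < μ) (hσ : 0 < σ) {γ : ℝ → ℝ × ℝ}
    (hγ : ∀ t, HasDerivAt γ (field μ σ (γ t)) t) {c : ℝ}
    (hlevel : ∀ t, γ t ∈ box μ σ ∩ ham μ σ ⁻¹' {c}) : ∃ τ > 0, Function.Periodic γ τ := by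
  obtain ⟨t₁, -, h₁⟩ := exists_snd_eq hμ hσ hγ hlevel 0
  obtain ⟨t₂, ht₂, h₂⟩ := exists_snd_eq hμ hσ hγ hlevel (t₁ + 1)
  refine ⟨2 * (t₂ - t₁), by linarith, fun t => ?_⟩
  rw [eq_reflect_of_snd_eq hσ.ne' hγ h₂, eq_reflect_of_snd_eq hσ.ne' hγ h₁ t]
  ring_nf

end PQSystem

theorem periodic_orbits_in_rectangle (μ σ : ℝ) (hμ : 0 < μ) (hσ : 0 < σ)
    (p₀ q₀ : ℝ) (hp₀ : p₀ ∈ Set.Ioo (0 : ℝ) 1) (hq₀ : q₀ ∈ Set.Ioo 0 (2 * μ / σ))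
    (I : Set ℝ) (hI : I.OrdConnected) (h0 : (0 : ℝ) ∈ I)
    (p q : ℝ → ℝ) (hp0 : p 0 = p₀) (hq0 : q 0 = q₀)
    (hsol : ∀ t ∈ I,
      HasDerivAt p (μ * (p t - (p t) ^ 2) + σ * ((p t) ^ 2 - p t) * q t) t ∧
      HasDerivAt q (μ * (2 * p t - 1) * q t + σ / 2 * (1 - 2 * p t) * (q t) ^ 2) t) :
    ∃ P Q : ℝ → ℝ,
      (∀ t : ℝ,
        HasDerivAt P (μ * (P t - (P t) ^ 2) + σ * ((P t) ^ 2 - P t) * Q t) t ∧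
        HasDerivAt Q (μ * (2 * P t - 1) * Q t + σ / 2 * (1 - 2 * P t) * (Q t) ^ 2) t) ∧
      (∀ t ∈ I, P t = p t ∧ Q t = q t) ∧
      ∃ τ > (0 : ℝ), ∀ t : ℝ, P (t + τ) = P t ∧ Q (t + τ) = Q t := by
  obtain ⟨γ, hγ0, hγ, hlevel⟩ := PQSystem.exists_global_solution hσ (x₀ := (p₀, q₀)) ⟨hp₀, hq₀⟩
  obtain ⟨τ, hτ, hper⟩ := PQSystem.exists_periodic hμ hσ hγ hlevel
  have hγI : EqOn γ (fun t => (p t, q t)) I :=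
    (PQSystem.contDiff_field μ σ).locallyLipschitz.eqOn_of_hasDerivAt hI h0 (fun t _ => hγ t)
      (fun t ht => (hsol t ht).1.prodMk (hsol t ht).2) (by rw [hγ0, hp0, hq0])
  exact ⟨fun t => (γ t).1, fun t => (γ t).2, fun t => ⟨(hγ t).fst, (hγ t).snd⟩,
    fun t ht => Prod.ext_iff.1 (hγI ht), τ, hτ, fun t => Prod.ext_iff.1 (hper t)⟩
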